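/- arXiv:2101.11410 — 3 statements merged into one kernel-verified Lean document; each statement's English description precedes it below -/
import Mathlib

section
/- Let A be a C*-algebra, M a Hilbert C*-module over A, I a finite index set, and {q_i}_{i∈I} an orthonormal system in M. Let V = { Σ_{i∈I} q_i c_i : c_i ∈ A } be the A-submodule generated by {q_i}_{i∈I}, and define P : M → V by P u = Σ_{i∈I} q_i ⟨q_i, u⟩. Then for every u ∈ M, P u is the unique minimizer of v ↦ |u − v|² over V with respect to the order of A: |u − P u|² ≤ |u − v|² for every v ∈ V, and any v ∈ V satisfying |u − v|² = |u − P u|² equals P u. -/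
/-- A (right) Hilbert C*-module over a C*-algebra `A`: a right `A`-module `M` with an
`A`-valued inner product, `A`-linear in the second variable, satisfying the listed axioms,
whose norm is `‖u‖ = ‖⟨u,u⟩‖^(1/2)` (so that completeness of `M` as a normed group is
completeness for this norm). -/
structure HilbertCStarModule (A : Type*) (M : Type*) [CStarAlgebra A] [PartialOrder A]
    [StarOrderedRing A] [NormedAddCommGroup M] where
  smul : M → A → M
  inner : M → M → A
  add_smul : ∀ (u v : M) (c : A), smul (u + v) c = smul u c + smul v c
  smul_add : ∀ (u : M) (c d : A), smul u (c + d) = smul u c + smul u d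
  smul_mul : ∀ (u : M) (c d : A), smul u (c * d) = smul (smul u c) d
  smul_one : ∀ u : M, smul u 1 = u
  inner_add_right : ∀ u v w : M, inner u (v + w) = inner u v + inner u w
  inner_smul_right : ∀ (u v : M) (c : A), inner u (smul v c) = inner u v * c
  star_inner : ∀ u v : M, star (inner u v) = inner v u
  inner_self_nonneg : ∀ u : M, 0 ≤ inner u u
  inner_self_eq_zero : ∀ u : M, inner u u = 0 → u = 0
  norm_eq : ∀ u : M, ‖u‖ = Real.sqrt ‖inner u u‖

namespace HilbertCStarModule

variable {A M : Type*} [CStarAlgebra A] [PartialOrder A] [StarOrderedRing A]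
  [NormedAddCommGroup M] (H : HilbertCStarModule A M)

lemma inner_zero_right (u : M) : H.inner u 0 = 0 := by
  have h := H.inner_add_right u 0 0
  rw [add_zero] at h
  exact left_eq_add.mp h

lemma inner_neg_right (u v : M) : H.inner u (-v) = -H.inner u v := by
  have h := H.inner_add_right u v (-v)
  rw [add_neg_cancel, H.inner_zero_right] at h
  exact eq_neg_of_add_eq_zero_right h.symm

lemma inner_sub_right (u v w : M) : H.inner u (v - w) = H.inner u v - H.inner u w := by
  rw [sub_eq_add_neg, H.inner_add_right, H.inner_neg_right, ← sub_eq_add_neg]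

lemma inner_add_left (u v w : M) : H.inner (u + v) w = H.inner u w + H.inner v w := by
  rw [← H.star_inner, H.inner_add_right, star_add, H.star_inner, H.star_inner]

lemma inner_sub_left (u v w : M) : H.inner (u - v) w = H.inner u w - H.inner v w := by
  rw [← H.star_inner, H.inner_sub_right, star_sub, H.star_inner, H.star_inner]

lemma inner_smul_left (u v : M) (c : A) :
    H.inner (H.smul u c) v = star c * H.inner u v := by
  rw [← H.star_inner, H.inner_smul_right, star_mul, H.star_inner]

lemma inner_sum_right {ι : Type*} (s : Finset ι) (u : M) (f : ι → M) :
    H.inner u (∑ i ∈ s, f i) = ∑ i ∈ s, H.inner u (f i) :=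
  map_sum (AddMonoidHom.mk' (H.inner u) (H.inner_add_right u)) f s

lemma inner_sum_left {ι : Type*} (s : Finset ι) (f : ι → M) (w : M) :
    H.inner (∑ i ∈ s, f i) w = ∑ i ∈ s, H.inner (f i) w :=
  map_sum (AddMonoidHom.mk' (fun x => H.inner x w) (fun a b => H.inner_add_left a b w)) f s

lemma smul_zero' (u : M) : H.smul u 0 = 0 := by
  have h := H.smul_add u 0 0
  rw [add_zero] at h
  exact left_eq_add.mp h

lemma smul_neg' (u : M) (c : A) : H.smul u (-c) = -H.smul u c := by
  have h := H.smul_add u c (-c)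
  rw [add_neg_cancel, H.smul_zero'] at h
  exact eq_neg_of_add_eq_zero_right h.symm

lemma smul_sub' (u : M) (c d : A) : H.smul u (c - d) = H.smul u c - H.smul u d := by
  rw [sub_eq_add_neg, H.smul_add, H.smul_neg', ← sub_eq_add_neg]

lemma smul_inner_self (p : M)
    (he : H.inner p p * H.inner p p = H.inner p p) :
    H.smul p (H.inner p p) = p := by
  have hse : star (H.inner p p) = H.inner p p := H.star_inner p p
  have hz : H.inner (H.smul p (H.inner p p) - p) (H.smul p (H.inner p p) - p) = 0 := by
    rw [H.inner_sub_left, H.inner_sub_right, H.inner_sub_right,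
      H.inner_smul_right, H.inner_smul_left, H.inner_smul_right, hse]
    rw [mul_assoc, he, he]
    abel
  have := H.inner_self_eq_zero _ hz
  rwa [sub_eq_zero] at this

lemma absorb (p : M) (he : H.inner p p * H.inner p p = H.inner p p) (w : M) :
    H.inner p p * H.inner p w = H.inner p w := by
  conv_rhs => rw [← H.smul_inner_self p he]
  rw [H.inner_smul_left, H.star_inner]

end HilbertCStarModule

/-- **Minimization property of orthogonal projection operators.** For a finite orthonormal
system `{q i}` in a Hilbert C*-module `M` over `A`, spanning the submodule
`V = { ∑ i, q i • c i }`, the projection `P u = ∑ i, q i • ⟨q i, u⟩` is the unique minimizer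
of `v ↦ |u − v|² = ⟨u − v, u − v⟩` over `V` with respect to the order of `A`. -/
theorem min_orthogonal_projection {A M I : Type*} [CStarAlgebra A] [PartialOrder A]
    [StarOrderedRing A] [NormedAddCommGroup M] [CompleteSpace M] [Fintype I]
    (H : HilbertCStarModule A M) (q : I → M)
    (h_normalized : ∀ i, H.inner (q i) (q i) ≠ 0 ∧
      H.inner (q i) (q i) * H.inner (q i) (q i) = H.inner (q i) (q i))
    (h_orth : ∀ i j, i ≠ j → H.inner (q i) (q j) = 0)
    (u : M)
    (V : Set M) (hV : V = {v | ∃ c : I → A, v = ∑ i, H.smul (q i) (c i)})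
    (P : M) (hP : P = ∑ i, H.smul (q i) (H.inner (q i) u)) :
    P ∈ V ∧
    (∀ v ∈ V, H.inner (u - P) (u - P) ≤ H.inner (u - v) (u - v)) ∧
    (∀ v ∈ V, H.inner (u - v) (u - v) = H.inner (u - P) (u - P) → v = P) := by
  subst hV
  have hPmem : P ∈ {v | ∃ c : I → A, v = ∑ i, H.smul (q i) (c i)} :=
    ⟨fun i => H.inner (q i) u, hP⟩
  have hperp : ∀ j, H.inner (q j) (u - P) = 0 := by
    intro j
    rw [H.inner_sub_right, hP, H.inner_sum_right, Finset.sum_eq_single j]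
    · rw [H.inner_smul_right, H.absorb (q j) (h_normalized j).2, sub_self]
    · intro b _ hb
      rw [H.inner_smul_right, h_orth j b (Ne.symm hb), zero_mul]
    · intro h; exact absurd (Finset.mem_univ j) h
  have hperpV : ∀ v ∈ {v | ∃ c : I → A, v = ∑ i, H.smul (q i) (c i)},
      H.inner v (u - P) = 0 := by
    rintro v ⟨c, rfl⟩
    rw [H.inner_sum_left]
    refine Finset.sum_eq_zero fun i _ => ?_
    rw [H.inner_smul_left, hperp, mul_zero]
  have hperpV' : ∀ v ∈ {v | ∃ c : I → A, v = ∑ i, H.smul (q i) (c i)},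
      H.inner (u - P) v = 0 := fun v hv => by
    rw [← H.star_inner, hperpV v hv, star_zero]
  have hsub : ∀ v ∈ {v | ∃ c : I → A, v = ∑ i, H.smul (q i) (c i)},
      P - v ∈ {v | ∃ c : I → A, v = ∑ i, H.smul (q i) (c i)} := by
    rintro v ⟨c, rfl⟩
    refine ⟨fun i => H.inner (q i) u - c i, ?_⟩
    rw [hP, ← Finset.sum_sub_distrib]
    exact Finset.sum_congr rfl fun i _ => (H.smul_sub' _ _ _).symm
  have key : ∀ v ∈ {v | ∃ c : I → A, v = ∑ i, H.smul (q i) (c i)},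
      H.inner (u - v) (u - v)
        = H.inner (u - P) (u - P) + H.inner (P - v) (P - v) := by
    intro v hv
    have hd := hsub v hv
    have h1 : u - v = (u - P) + (P - v) := by abel
    rw [h1, H.inner_add_left, H.inner_add_right, H.inner_add_right,
      hperpV _ hd, hperpV' _ hd, add_zero, zero_add]
  refine ⟨hPmem, ?_, ?_⟩
  · intro v hv
    rw [key v hv]
    exact le_add_of_nonneg_right (H.inner_self_nonneg _)
  · intro v hv heq
    rw [key v hv] at heq
    have h0 : H.inner (P - v) (P - v) = 0 := left_eq_add.mp heq.symm
    have := H.inner_self_eq_zero _ h0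
    rw [sub_eq_zero] at this
    exact this.symm
end

section
/- Let m ∈ ℕ and let A = ℂ^{m×m} be the C*-algebra of m×m complex matrices with the operator norm. Let M be a Banach A-module, let M₀ be a closed A-submodule of M, and let u₁ ∈ M with u₁ ∉ M₀. Then there exists a bounded A-linear map f : M → A such that f(u) = 0 for all u ∈ M₀ and f(u₁) ≠ 0. -/
open scoped Matrix.Norms.L2Operator

/-- A Banach module over the C*-algebra `A = ℂ^{m×m}` of `m × m` complex matrices with the
operator norm: a complex Banach space `M` with a right `A`-module structure satisfying
`‖u·c‖ ≤ ‖u‖ ‖c‖`, compatibly with the complex scalar actions. -/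
structure BanachMatrixModule (m : ℕ) (M : Type*) [NormedAddCommGroup M] [NormedSpace ℂ M] where
  smul : M → Matrix (Fin m) (Fin m) ℂ → M
  add_smul : ∀ (u v : M) (c : Matrix (Fin m) (Fin m) ℂ), smul (u + v) c = smul u c + smul v c
  smul_add : ∀ (u : M) (c d : Matrix (Fin m) (Fin m) ℂ), smul u (c + d) = smul u c + smul u d
  smul_mul : ∀ (u : M) (c d : Matrix (Fin m) (Fin m) ℂ), smul u (c * d) = smul (smul u c) d
  smul_one : ∀ u : M, smul u 1 = u
  smul_complex : ∀ (α : ℂ) (u : M) (c : Matrix (Fin m) (Fin m) ℂ),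
    smul u (α • c) = α • smul u c
  norm_smul_le : ∀ (u : M) (c : Matrix (Fin m) (Fin m) ℂ), ‖smul u c‖ ≤ ‖u‖ * ‖c‖
/-!
Hahn–Banach on the quotient `M ⧸ M₀` gives a continuous functional `φ` on `M` vanishing on `M₀`
with `φ u₁ ≠ 0`. With matrix units `E_ji`, `f u = (φ (u · E_ji))_ij` is a bounded `A`-linear map
with `trace ∘ f = φ` (as `∑ E_ii = 1`). It vanishes on `M₀` because `M₀` is an `A`-submodule, and
`f u₁ ≠ 0` because its trace is `φ u₁`.
-/

open Matrix

theorem exists_strongDual_eq_zero_of_notMem {𝕜 E : Type*} [RCLike 𝕜] [NormedAddCommGroup E]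
    [NormedSpace 𝕜 E] (p : Submodule 𝕜 E) (hp : IsClosed (p : Set E)) {x : E} (hx : x ∉ p) :
    ∃ φ : StrongDual 𝕜 E, (∀ y ∈ p, φ y = 0) ∧ φ x ≠ 0 := by
  have : IsClosed (p : Set E) := hp
  obtain ⟨g, hg⟩ := SeparatingDual.exists_ne_zero (R := 𝕜) (x := p.mkQ x)
    (by rwa [Ne, Submodule.mkQ_apply, Submodule.Quotient.mk_eq_zero])
  exact ⟨g.comp p.mkQL, fun y hy => by simp [(Submodule.Quotient.mk_eq_zero p).2 hy], hg⟩

theorem Matrix.mul_single_one_eq_sum {n α : Type*} [Fintype n] [DecidableEq n] [Semiring α]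
    (c : Matrix n n α) (i j : n) : c * single j i 1 = ∑ k, c k j • single k i 1 := by
  ext a b
  by_cases hb : b = i
  · subst hb; simp [Matrix.sum_apply, single_apply]
  · simp [Matrix.sum_apply, hb, Ne.symm hb]

namespace BanachMatrixModule

variable {m : ℕ} {M : Type*} [NormedAddCommGroup M] [NormedSpace ℂ M] (B : BanachMatrixModule m M)

theorem smul_smul_one (α : ℂ) (u : M) : B.smul u (α • 1) = α • u := by
  rw [B.smul_complex, B.smul_one]

theorem complex_smul (α : ℂ) (u : M) (c : Matrix (Fin m) (Fin m) ℂ) :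
    B.smul (α • u) c = α • B.smul u c := by
  rw [← B.smul_smul_one, ← B.smul_mul, smul_one_mul, B.smul_complex]

theorem smul_sum {ι : Type*} (u : M) (s : Finset ι) (c : ι → Matrix (Fin m) (Fin m) ℂ) :
    B.smul u (∑ i ∈ s, c i) = ∑ i ∈ s, B.smul u (c i) :=
  map_sum (AddMonoidHom.mk' (B.smul u) (B.smul_add u)) c s

def toSubmodule (M₀ : Set M) (h_zero : (0 : M) ∈ M₀) (h_add : ∀ u ∈ M₀, ∀ v ∈ M₀, u + v ∈ M₀)
    (h_smul : ∀ u ∈ M₀, ∀ c : Matrix (Fin m) (Fin m) ℂ, B.smul u c ∈ M₀) : Submodule ℂ M where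
  carrier := M₀
  add_mem' {u v} hu hv := h_add u hu v hv
  zero_mem' := h_zero
  smul_mem' α u hu := B.smul_smul_one α u ▸ h_smul u hu _

noncomputable def smulRightCLM (c : Matrix (Fin m) (Fin m) ℂ) : M →L[ℂ] M :=
  LinearMap.mkContinuous
    { toFun u := B.smul u c
      map_add' u v := B.add_smul u v c
      map_smul' α u := B.complex_smul α u c }
    ‖c‖ fun u => by rw [mul_comm]; exact B.norm_smul_le u c

noncomputable def matrixLift (φ : StrongDual ℂ M) : M →L[ℂ] Matrix (Fin m) (Fin m) ℂ where
  toFun u := of fun i j => φ (B.smul u (single j i 1))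
  map_add' u v := by ext i j; simp [B.add_smul]
  map_smul' α u := by ext i j; simp [B.complex_smul]
  cont := continuous_matrix fun i j => φ.continuous.comp (B.smulRightCLM _).continuous

variable (φ : StrongDual ℂ M)

@[simp]
theorem matrixLift_apply (u : M) (i j : Fin m) :
    B.matrixLift φ u i j = φ (B.smul u (single j i 1)) := rfl

theorem matrixLift_smul (u : M) (c : Matrix (Fin m) (Fin m) ℂ) :
    B.matrixLift φ (B.smul u c) = B.matrixLift φ u * c := by
  ext i j
  simp only [matrixLift_apply, ← B.smul_mul, mul_single_one_eq_sum, B.smul_sum, B.smul_complex,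
    map_sum, map_smul, mul_apply, smul_eq_mul, mul_comm]

theorem trace_matrixLift (u : M) : (B.matrixLift φ u).trace = φ u := by
  simp [trace, ← map_sum, ← B.smul_sum, sum_single_one, B.smul_one]

end BanachMatrixModule

theorem separation_banach_matrix_module_general {m : ℕ} {M : Type*}
    [NormedAddCommGroup M] [NormedSpace ℂ M]
    (B : BanachMatrixModule m M)
    (M₀ : Set M) (h_closed : IsClosed M₀) (h_zero : (0 : M) ∈ M₀)
    (h_add : ∀ u ∈ M₀, ∀ v ∈ M₀, u + v ∈ M₀)
    (h_smul : ∀ u ∈ M₀, ∀ c : Matrix (Fin m) (Fin m) ℂ, B.smul u c ∈ M₀)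
    (u₁ : M) (hu₁ : u₁ ∉ M₀) :
    ∃ f : M → Matrix (Fin m) (Fin m) ℂ,
      (∀ u v : M, f (u + v) = f u + f v) ∧
      (∀ (α : ℂ) (u : M), f (α • u) = α • f u) ∧
      (∀ (u : M) (c : Matrix (Fin m) (Fin m) ℂ), f (B.smul u c) = f u * c) ∧
      (∃ C : ℝ, ∀ u : M, ‖f u‖ ≤ C * ‖u‖) ∧
      (∀ u ∈ M₀, f u = 0) ∧
      f u₁ ≠ 0 := by
  obtain ⟨φ, hφ_zero, hφ_u₁⟩ :=
    exists_strongDual_eq_zero_of_notMem (B.toSubmodule M₀ h_zero h_add h_smul) h_closed hu₁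
  refine ⟨B.matrixLift φ, map_add _, map_smul _, B.matrixLift_smul φ,
    ⟨_, (B.matrixLift φ).le_opNorm⟩, fun u hu => ?_, fun h => hφ_u₁ ?_⟩
  · ext i j
    exact hφ_zero _ (h_smul u hu _)
  · rw [← B.trace_matrixLift φ u₁, h, trace_zero]

/-- **Hahn–Banach-type separation for Banach modules over matrix algebras.** If `M₀` is a
closed `A`-submodule of a Banach `A`-module `M` (`A = ℂ^{m×m}` with the operator norm) and
`u₁ ∉ M₀`, then there is a bounded `A`-linear map `f : M → A` vanishing on `M₀` with
`f u₁ ≠ 0`. -/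
theorem separation_banach_matrix_module {m : ℕ} {M : Type*}
    [NormedAddCommGroup M] [NormedSpace ℂ M] [CompleteSpace M]
    (B : BanachMatrixModule m M)
    (M₀ : Set M) (h_closed : IsClosed M₀) (h_zero : (0 : M) ∈ M₀)
    (h_add : ∀ u ∈ M₀, ∀ v ∈ M₀, u + v ∈ M₀)
    (h_smul : ∀ u ∈ M₀, ∀ c : Matrix (Fin m) (Fin m) ℂ, B.smul u c ∈ M₀)
    (u₁ : M) (hu₁ : u₁ ∉ M₀) :
    ∃ f : M → Matrix (Fin m) (Fin m) ℂ,
      (∀ u v : M, f (u + v) = f u + f v) ∧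
      (∀ (α : ℂ) (u : M), f (α • u) = α • f u) ∧
      (∀ (u : M) (c : Matrix (Fin m) (Fin m) ℂ), f (B.smul u c) = f u * c) ∧
      (∃ C : ℝ, ∀ u : M, ‖f u‖ ≤ C * ‖u‖) ∧
      (∀ u ∈ M₀, f u = 0) ∧
      f u₁ ≠ 0 :=
  separation_banach_matrix_module_general B M₀ h_closed h_zero h_add h_smul u₁ hu₁
end

section
/- Let W be a separable complex Hilbert space with orthonormal basis (e_i)_{i≥1}, and let X be a nonempty set. For each i let k_i : X × X → ℂ be a positive definite kernel, and assume that for every x ∈ X there exists C > 0 such that |k_i(x,x)| ≤ C for all i. Then for every x, y ∈ X there is a unique bounded operator k(x,y) ∈ B(W) with k(x,y) e_i = k_i(x,y) e_i for all i, and the resulting map k : X × X → B(W) is a B(W)-valued positive definite kernel: k(x,y) = k(y,x)* for all x, y ∈ X, and for every n ∈ ℕ, c_1,…,c_n ∈ B(W), and x_1,…,x_n ∈ X, the operator Σ_{i,j=1}^n c_i* k(x_i,x_j) c_j is positive. -/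
/-!
Cauchy–Schwarz for each scalar kernel (the `2 × 2` Gram matrix at `x, y` has nonnegative
determinant) gives `|kᵢ(x,y)|² ≤ kᵢ(x,x) kᵢ(y,y)`, so the multipliers `kᵢ(x,y)` are bounded in `i`
and define a bounded diagonal operator, unique because the basis spans a dense subspace.
By Parseval, `⟪w, ∑ c_p* k(x_p,x_q) c_q w⟫ = ∑ᵢ ∑ p q, conj (a_{ip}) a_{iq} kᵢ(x_p,x_q)` with
`a_{ip} = ⟪eᵢ, c_p w⟫`, a convergent sum of nonnegative terms.
-/

open scoped ComplexOrder InnerProductSpace ComplexConjugate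

namespace lp

theorem exists_pointwise_mul_clm {ι 𝕜 : Type*} [RCLike 𝕜] (p : ENNReal) [Fact (1 ≤ p)]
    (m : ι → 𝕜) {M : ℝ} (hm : ∀ i, ‖m i‖ ≤ M) :
    ∃ T : lp (fun _ : ι => 𝕜) p →L[𝕜] lp (fun _ : ι => 𝕜) p, ∀ f i, T f i = m i * f i := by
  have hmul_le (f : lp (fun _ : ι => 𝕜) p) (i : ι) : ‖m i * f i‖ ≤ ‖((M : 𝕜) • f) i‖ := by
    rw [norm_mul, lp.coeFn_smul, Pi.smul_apply, norm_smul, RCLike.norm_ofReal]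
    gcongr
    exact (hm i).trans (le_abs_self M)
  let L : lp (fun _ : ι => 𝕜) p →ₗ[𝕜] lp (fun _ : ι => 𝕜) p :=
    { toFun f := ⟨fun i => m i * f i, (lp.memℓp ((M : 𝕜) • f)).mono' (hmul_le f)⟩
      map_add' f g := lp.ext <| funext fun i => mul_add (m i) (f i) (g i)
      map_smul' c f := lp.ext <| funext fun i => mul_left_comm (m i) c (f i) }
  refine ⟨L.mkContinuous ‖(M : 𝕜)‖ fun f => ?_, fun f i => rfl⟩
  rw [← norm_smul]
  exact lp.norm_mono (zero_lt_one.trans_le Fact.out).ne' (hmul_le f)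

end lp

namespace HilbertBasis

variable {ι 𝕜 E : Type*} [RCLike 𝕜] [NormedAddCommGroup E] [InnerProductSpace 𝕜 E]
  (b : HilbertBasis ι 𝕜 E)

theorem ext_inner_left {x y : E} (h : ∀ i, ⟪b i, x⟫_𝕜 = ⟪b i, y⟫_𝕜) : x = y :=
  b.repr.injective <| lp.ext <| funext fun i => by simpa only [b.repr_apply_apply] using h i

theorem continuousLinearMap_ext {F : Type*} [NormedAddCommGroup F] [NormedSpace 𝕜 F]
    {S T : E →L[𝕜] F} (h : ∀ i, S (b i) = T (b i)) : S = T :=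
  ContinuousLinearMap.ext_on (Submodule.dense_iff_topologicalClosure_eq_top.mpr b.dense_span)
    (Set.forall_mem_range.mpr h)

theorem apply_mul_inner_eq (f : ι → 𝕜) (i j : ι) :
    f j * ⟪b j, b i⟫_𝕜 = f i * ⟪b j, b i⟫_𝕜 := by
  classical
  rw [orthonormal_iff_ite.mp b.orthonormal j i]
  split_ifs with h
  · rw [h]
  · simp

theorem exists_diagonal (m : ι → 𝕜) {M : ℝ} (hm : ∀ i, ‖m i‖ ≤ M) :
    ∃ T : E →L[𝕜] E, ∀ i, T (b i) = m i • b i := by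
  obtain ⟨D, hD⟩ := lp.exists_pointwise_mul_clm 2 m hm
  refine ⟨(b.repr.symm : lp (fun _ : ι => 𝕜) 2 →L[𝕜] E) ∘L D ∘L (b.repr : E →L[𝕜] lp _ 2),
    fun i => b.ext_inner_left fun j => ?_⟩
  rw [← b.repr_apply_apply]
  simp only [ContinuousLinearMap.comp_apply, ContinuousLinearEquiv.coe_coe,
    LinearIsometryEquiv.coe_toContinuousLinearEquiv, LinearIsometryEquiv.apply_symm_apply, hD,
    b.repr_apply_apply, inner_smul_right]
  exact b.apply_mul_inner_eq m i j

variable [CompleteSpace E] {T : E →L[𝕜] E} {m : ι → 𝕜}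

theorem adjoint_apply_of_diagonal (hT : ∀ i, T (b i) = m i • b i) (i : ι) :
    T.adjoint (b i) = conj (m i) • b i :=
  b.ext_inner_left fun j => by
    rw [ContinuousLinearMap.adjoint_inner_right, hT, inner_smul_left, inner_smul_right]
    exact b.apply_mul_inner_eq (fun i => conj (m i)) i j

theorem hasSum_inner_of_diagonal (hT : ∀ i, T (b i) = m i • b i) (x y : E) :
    HasSum (fun i => conj ⟪b i, x⟫_𝕜 * ⟪b i, y⟫_𝕜 * m i) ⟪x, T y⟫_𝕜 := by
  convert b.hasSum_inner_mul_inner x (T y) using 2 with i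
  rw [← ContinuousLinearMap.adjoint_inner_left, b.adjoint_apply_of_diagonal hT, inner_smul_left,
    RCLike.conj_conj, inner_conj_symm]
  ring

end HilbertBasis

theorem isSelfAdjoint_sum_star_mul_mul {ι R : Type*} [Fintype ι] [NonUnitalSemiring R]
    [StarRing R] {k : ι → ι → R} (hk : ∀ p q, star (k p q) = k q p) (c : ι → R) :
    IsSelfAdjoint (∑ p, ∑ q, star (c p) * k p q * c q) := by
  simp only [IsSelfAdjoint, star_sum, star_mul, star_star, hk, mul_assoc]
  exact Finset.sum_comm

structure IsPosDefKernel {X : Type*} (K : X → X → ℂ) : Prop where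
  conj_symm : ∀ x y, K x y = conj (K y x)
  nonneg : ∀ (n : ℕ) (α : Fin n → ℂ) (x : Fin n → X),
    0 ≤ ∑ p, ∑ q, conj (α p) * α q * K (x p) (x q)

namespace IsPosDefKernel

variable {X : Type*} {K : X → X → ℂ}

theorem posSemidef_gram (hK : IsPosDefKernel K) {n : ℕ} (x : Fin n → X) :
    (Matrix.of fun p q => K (x p) (x q)).PosSemidef := by
  refine .of_dotProduct_mulVec_nonneg (funext₂ fun p q => (hK.conj_symm (x p) (x q)).symm)
    fun α => ?_
  convert hK.nonneg n α x using 1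
  simp only [dotProduct, Matrix.mulVec, Matrix.of_apply, Finset.mul_sum, Pi.star_apply,
    RCLike.star_def]
  exact Finset.sum_congr rfl fun p _ => Finset.sum_congr rfl fun q _ => by ring

theorem sq_norm_le (hK : IsPosDefKernel K) (x y : X) : ‖K x y‖ ^ 2 ≤ ‖K x x‖ * ‖K y y‖ := by
  have hdet := (hK.posSemidef_gram ![x, y]).det_nonneg
  simp only [Matrix.det_fin_two, Matrix.of_apply, Matrix.cons_val_zero, Matrix.cons_val_one,
    hK.conj_symm y x, Complex.mul_conj, Complex.normSq_eq_norm_sq, sub_nonneg] at hdet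
  calc ‖K x y‖ ^ 2 ≤ (K x x * K y y).re := by
        simpa only [Complex.ofReal_re] using (Complex.le_def.mp hdet).1
    _ ≤ ‖K x x‖ * ‖K y y‖ := (Complex.re_le_norm _).trans (norm_mul _ _).le

end IsPosDefKernel

namespace HilbertBasis

variable {ι E X : Type*} [NormedAddCommGroup E] [InnerProductSpace ℂ E] [CompleteSpace E]
  (b : HilbertBasis ι ℂ E) {K : ι → X → X → ℂ} {k : X → X → (E →L[ℂ] E)}

theorem diagonal_kernel_eq_star (hK : ∀ i x y, K i x y = conj (K i y x))
    (hk : ∀ x y i, k x y (b i) = K i x y • b i) (x y : X) : k x y = star (k y x) :=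
  b.continuousLinearMap_ext fun i => by
    rw [hk, ContinuousLinearMap.star_eq_adjoint, b.adjoint_apply_of_diagonal (hk y x), hK]

theorem isPositive_sum_star_mul_diagonal_kernel_mul (hK : ∀ i, IsPosDefKernel (K i))
    (hk : ∀ x y i, k x y (b i) = K i x y • b i) {n : ℕ} (c : Fin n → (E →L[ℂ] E))
    (x : Fin n → X) : (∑ p, ∑ q, star (c p) * k (x p) (x q) * c q).IsPositive := by
  have hsa := isSelfAdjoint_sum_star_mul_mul (k := fun p q => k (x p) (x q))
    (fun p q => (b.diagonal_kernel_eq_star (fun i => (hK i).conj_symm) hk _ _).symm) c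
  refine (ContinuousLinearMap.isPositive_iff' _).mpr ⟨hsa, fun w => ?_⟩
  have hsum : HasSum (fun i => ∑ p, ∑ q, conj ⟪b i, c p w⟫_ℂ * ⟪b i, c q w⟫_ℂ * K i (x p) (x q))
      ⟪w, (∑ p, ∑ q, star (c p) * k (x p) (x q) * c q) w⟫_ℂ := by
    simp only [sum_apply, inner_sum]
    refine hasSum_sum fun p _ => hasSum_sum fun q _ => ?_
    rw [mul_apply_eq_comp, mul_apply_eq_comp, ContinuousLinearMap.star_eq_adjoint,
      ContinuousLinearMap.adjoint_inner_right]
    exact b.hasSum_inner_of_diagonal (hk _ _) _ _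
  exact (hsum.nonneg fun i => (hK i).nonneg n _ x).trans_eq (hsa.isSymmetric w w).symm

end HilbertBasis

theorem diagonal_operator_valued_pdk_general
    {W : Type*} [NormedAddCommGroup W] [InnerProductSpace ℂ W] [CompleteSpace W]
    (e : HilbertBasis ℕ ℂ W)
    {X : Type*} (kc : ℕ → X → X → ℂ)
    (h_herm : ∀ (i : ℕ) (x y : X), kc i x y = starRingEnd ℂ (kc i y x))
    (h_pd : ∀ (i : ℕ) (n : ℕ) (α : Fin n → ℂ) (x : Fin n → X),
      0 ≤ ∑ p, ∑ q, starRingEnd ℂ (α p) * α q * kc i (x p) (x q))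
    (h_bdd : ∀ x : X, ∃ C : ℝ, 0 < C ∧ ∀ i : ℕ, ‖kc i x x‖ ≤ C) :
    (∀ x y : X, ∃! T : W →L[ℂ] W, ∀ i : ℕ, T (e i) = kc i x y • e i) ∧
    (∀ k : X → X → (W →L[ℂ] W),
      (∀ (x y : X) (i : ℕ), k x y (e i) = kc i x y • e i) →
      (∀ x y : X, k x y = star (k y x)) ∧
      (∀ (n : ℕ) (c : Fin n → (W →L[ℂ] W)) (x : Fin n → X),
        (∑ p, ∑ q, star (c p) * k (x p) (x q) * c q).IsPositive)) := by
  have hK (i : ℕ) : IsPosDefKernel (kc i) := ⟨h_herm i, h_pd i⟩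
  refine ⟨fun x y => ?_, fun k hk => ⟨e.diagonal_kernel_eq_star h_herm hk,
    fun n c x => e.isPositive_sum_star_mul_diagonal_kernel_mul hK hk c x⟩⟩
  obtain ⟨Cx, hCx_pos, hCx⟩ := h_bdd x
  obtain ⟨Cy, hCy_pos, hCy⟩ := h_bdd y
  have hbound (i : ℕ) : ‖kc i x y‖ ≤ √(Cx * Cy) := by
    rw [Real.le_sqrt (norm_nonneg _) (mul_pos hCx_pos hCy_pos).le]
    calc ‖kc i x y‖ ^ 2 ≤ ‖kc i x x‖ * ‖kc i y y‖ := (hK i).sq_norm_le x y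
      _ ≤ Cx * Cy := mul_le_mul (hCx i) (hCy i) (norm_nonneg _) hCx_pos.le
  obtain ⟨T, hT⟩ := e.exists_diagonal (fun i => kc i x y) hbound
  exact ⟨T, hT, fun S hS => e.continuousLinearMap_ext fun i => by rw [hS, hT]⟩

/-- **Diagonal operator-valued positive definite kernels.** Let `W` be a separable complex
Hilbert space with Hilbert (orthonormal) basis `(e i)_{i : ℕ}`, and for each `i` let
`kc i : X × X → ℂ` be a positive definite kernel, uniformly bounded on the diagonal at each
point. Then for all `x y` there is a unique bounded operator `k x y` with
`k x y (e i) = kc i x y • e i` for all `i`, and any such family is a `B(W)`-valued positive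
definite kernel: `k x y = (k y x)*` and all operators `∑ i j, (c i)* k (x i) (x j) (c j)`
are positive. -/
theorem diagonal_operator_valued_pdk
    {W : Type*} [NormedAddCommGroup W] [InnerProductSpace ℂ W] [CompleteSpace W]
    (e : HilbertBasis ℕ ℂ W)
    {X : Type*} [Nonempty X] (kc : ℕ → X → X → ℂ)
    (h_herm : ∀ (i : ℕ) (x y : X), kc i x y = starRingEnd ℂ (kc i y x))
    (h_pd : ∀ (i : ℕ) (n : ℕ) (α : Fin n → ℂ) (x : Fin n → X),
      0 ≤ ∑ p, ∑ q, starRingEnd ℂ (α p) * α q * kc i (x p) (x q))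
    (h_bdd : ∀ x : X, ∃ C : ℝ, 0 < C ∧ ∀ i : ℕ, ‖kc i x x‖ ≤ C) :
    (∀ x y : X, ∃! T : W →L[ℂ] W, ∀ i : ℕ, T (e i) = kc i x y • e i) ∧
    (∀ k : X → X → (W →L[ℂ] W),
      (∀ (x y : X) (i : ℕ), k x y (e i) = kc i x y • e i) →
      (∀ x y : X, k x y = star (k y x)) ∧
      (∀ (n : ℕ) (c : Fin n → (W →L[ℂ] W)) (x : Fin n → X),
        (∑ p, ∑ q, star (c p) * k (x p) (x q) * c q).IsPositive)) :=
  diagonal_operator_valued_pdk_general e kc h_herm h_pd h_bdd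
end
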